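/- arXiv:2302.09510 — 2 statements merged into one kernel-verified Lean document; each statement's English description precedes it below -/
import Mathlib

section
/- Let $H$ be a Hilbert space and $H_0, H_1, \dots, H_d$ closed subspaces of $H$ with $H_{add} = H_0 + H_1 + \dots + H_d$. Let $\Pi_j$ denote the orthogonal projection onto $H_j$, and suppose there exists $\gamma \in (0,1)$ such that the Gauss–Seidel iteration operator $T = (I-\Pi_d)(I-\Pi_{d-1})\cdots(I-\Pi_0)$ satisfies $\|T x\| \le \gamma \|x\|$ for all $x \in H_{add}$. Then for any $y \in H$, the backfitting iterates defined by cyclically updating $m_j^{[r+1]} = \Pi_j\big(y - \sum_{l<j} m_l^{[r+1]} - \sum_{l>j} m_l^{[r]}\big)$ produce sums $m^{[r]} = \sum_j m_j^{[r]}$ converging geometrically to the orthogonal projection of $y$ onto the closure of $H_{add}$: $\|m^{[r]} - \Pi_{H_{add}} y\| \le C\gamma^{r}$ for some constant $C$ depending on the starting values. -/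
/-!
Write `T z = Fin.foldl (d+1) (fun z j => z - Π_j z) z` for one Gauss–Seidel sweep. Since `y - py`
is orthogonal to every `H_j`, the update may be computed with `py` in place of `y`; once the old
components lie in the `H_j` (from the first sweep on), the residual `py - ∑ j, m r j` is then
mapped to the next one by `T`. These residuals lie in the closure of `H_add`, where the contraction
bound still holds by continuity of `T`, so they decay like `γ ^ r`.
-/

open scoped RealInnerProductSpace

theorem Fin.continuous_foldl {X : Type*} [TopologicalSpace X] {n : ℕ} {f : X → Fin n → X}
    (hf : ∀ j, Continuous fun x => f x j) : Continuous (Fin.foldl n f) := by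
  induction n with
  | zero => exact continuous_id
  | succ n ih =>
    have hsplit : Fin.foldl (n + 1) f = Fin.foldl n (fun z i => f z i.succ) ∘ (f · 0) := by
      funext x; exact Fin.foldl_succ ..
    rw [hsplit]
    exact (ih fun j => hf j.succ).comp (hf 0)

theorem norm_le_mul_norm_of_mem_closure {E F : Type*} [SeminormedAddGroup E]
    [SeminormedAddGroup F] {f : E → F} (hf : Continuous f) {s : Set E} {γ : ℝ}
    (h : ∀ x ∈ s, ‖f x‖ ≤ γ * ‖x‖) {x : E} (hx : x ∈ closure s) : ‖f x‖ ≤ γ * ‖x‖ :=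
  closure_minimal h (isClosed_le hf.norm (continuous_const.mul continuous_norm)) hx

theorem exists_le_mul_pow_of_le_mul_succ {u : ℕ → ℝ} {γ : ℝ} (hγ : 0 < γ)
    (h : ∀ r, u (r + 2) ≤ γ * u (r + 1)) : ∃ C, ∀ r, u r ≤ C * γ ^ r := by
  refine ⟨max (u 0) (u 1 / γ), ?_⟩
  rintro (_ | r)
  · simp
  · calc u (r + 1) ≤ γ ^ r * u 1 := le_geom (u := fun k => u (k + 1)) hγ.le r fun k _ => h k
      _ = u 1 / γ * γ ^ (r + 1) := by field_simp; ring
      _ ≤ max (u 0) (u 1 / γ) * γ ^ (r + 1) := by gcongr; exact le_max_right _ _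

theorem foldl_sub_starProjection_sub_sum {𝕜 E : Type*} [RCLike 𝕜] [NormedAddCommGroup E]
    [InnerProductSpace 𝕜 E] {n : ℕ} (K : Fin n → Submodule 𝕜 E)
    [∀ j, (K j).HasOrthogonalProjection] (x : E) {a b : Fin n → E} (ha : ∀ j, a j ∈ K j)
    (hb : ∀ j, b j = (K j).starProjection
      (x - ∑ l ∈ Finset.univ.filter (· < j), b l - ∑ l ∈ Finset.univ.filter (j < ·), a l)) :
    Fin.foldl n (fun z j => z - (K j).starProjection z) (x - ∑ j, a j) = x - ∑ j, b j := by
  induction n generalizing x with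
  | zero => simp
  | succ n ih =>
    have hb0 : b 0 = (K 0).starProjection (x - ∑ j : Fin n, a j.succ) := by
      simpa [Finset.sum_filter, Fin.sum_univ_succ] using hb 0
    have hfirst : x - ∑ j, a j - (K 0).starProjection (x - ∑ j, a j)
        = x - b 0 - ∑ j : Fin n, a j.succ := by
      rw [Fin.sum_univ_succ, sub_add_eq_sub_sub_swap, map_sub,
        Submodule.starProjection_eq_self_iff.mpr (ha 0), ← hb0]
      abel
    have hb' : ∀ j : Fin n, b j.succ = (K j.succ).starProjection (x - b 0
        - ∑ l ∈ Finset.univ.filter (· < j), b (Fin.succ l)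
        - ∑ l ∈ Finset.univ.filter (j < ·), a (Fin.succ l)) := by
      intro j
      rw [hb j.succ]
      simp [Finset.sum_filter, Fin.sum_univ_succ, sub_sub]
    rw [Fin.foldl_succ, hfirst, ih (fun j => K j.succ) (x - b 0) (fun j => ha j.succ) hb',
      Fin.sum_univ_succ, sub_sub]

theorem stmt_5_general {H : Type*} [NormedAddCommGroup H] [InnerProductSpace ℝ H]
    (d : ℕ) (Hs : Fin (d+1) → Submodule ℝ H) [∀ j, CompleteSpace (Hs j)]
    (γ : ℝ) (hγ0 : 0 < γ)
    (hT : ∀ x ∈ (⨆ j, Hs j : Submodule ℝ H),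
      ‖Fin.foldl (d+1) (fun z j => z - ((Hs j).orthogonalProjectionOnto z : H)) x‖ ≤ γ * ‖x‖)
    (y : H) (m : ℕ → Fin (d+1) → H)
    (hupd : ∀ r : ℕ, ∀ j : Fin (d+1),
      m (r+1) j = ((Hs j).orthogonalProjectionOnto
        (y - (∑ l ∈ Finset.univ.filter (fun l => l < j), m (r+1) l)
           - (∑ l ∈ Finset.univ.filter (fun l => j < l), m r l)) : H))
    (py : H) (hpy : py ∈ (⨆ j, Hs j : Submodule ℝ H).topologicalClosure)
    (hporth : ∀ w ∈ (⨆ j, Hs j : Submodule ℝ H).topologicalClosure, ⟪y - py, w⟫ = 0) :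
    ∃ C : ℝ, ∀ r : ℕ, ‖(∑ j, m r j) - py‖ ≤ C * γ ^ r := by
  simp only [Submodule.coe_orthogonalProjectionOnto_apply] at hT hupd
  set A := (⨆ j, Hs j : Submodule ℝ H).topologicalClosure
  have hle : ∀ j, Hs j ≤ A := fun j => (le_iSup Hs j).trans (Submodule.le_topologicalClosure _)
  have hTA : ∀ x ∈ A, ‖Fin.foldl (d+1) (fun z j => z - (Hs j).starProjection z) x‖ ≤ γ * ‖x‖ :=
    fun x hx => norm_le_mul_norm_of_mem_closure
      (Fin.continuous_foldl fun j => continuous_id.sub (Hs j).starProjection.continuous) hT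
      (by rwa [← Submodule.topologicalClosure_coe])
  have hmem : ∀ r j, m (r + 1) j ∈ Hs j := fun r j =>
    hupd r j ▸ Submodule.starProjection_apply_mem _ _
  have hupd_py : ∀ r j, m (r + 2) j = (Hs j).starProjection (py
      - ∑ l ∈ Finset.univ.filter (· < j), m (r + 2) l
      - ∑ l ∈ Finset.univ.filter (j < ·), m (r + 1) l) := by
    intro r j
    have horth : (Hs j).starProjection (y - py) = 0 :=
      (Hs j).starProjection_apply_eq_zero_iff.mpr fun w hw => by
        rw [inner_eq_zero_symm]; exact hporth w (hle j hw)
    rw [hupd, ← sub_eq_zero, ← map_sub]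
    convert horth using 2
    abel
  refine exists_le_mul_pow_of_le_mul_succ hγ0 fun r => ?_
  rw [norm_sub_rev, norm_sub_rev (∑ j, m (r + 1) j),
    ← foldl_sub_starProjection_sub_sum Hs py (hmem r) (hupd_py r)]
  exact hTA _ (sub_mem hpy (Submodule.sum_mem _ fun j _ => hle j (hmem r j)))

/-- geometric convergence of the (smooth) backfitting / Gauss–Seidel
iteration in a Hilbert space when the composed projection operator
`T = (I-Π_d)⋯(I-Π_0)` is a contraction on the additive subspace. -/
theorem stmt_5 {H : Type*} [NormedAddCommGroup H] [InnerProductSpace ℝ H] [CompleteSpace H]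
    (d : ℕ) (Hs : Fin (d+1) → Submodule ℝ H) [∀ j, CompleteSpace (Hs j)]
    (γ : ℝ) (hγ0 : 0 < γ) (hγ1 : γ < 1)
    (hT : ∀ x ∈ (⨆ j, Hs j : Submodule ℝ H),
      ‖Fin.foldl (d+1) (fun z j => z - ((Hs j).orthogonalProjectionOnto z : H)) x‖ ≤ γ * ‖x‖)
    (y : H) (m : ℕ → Fin (d+1) → H)
    (hupd : ∀ r : ℕ, ∀ j : Fin (d+1),
      m (r+1) j = ((Hs j).orthogonalProjectionOnto
        (y - (∑ l ∈ Finset.univ.filter (fun l => l < j), m (r+1) l)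
           - (∑ l ∈ Finset.univ.filter (fun l => j < l), m r l)) : H))
    (py : H) (hpy : py ∈ (⨆ j, Hs j : Submodule ℝ H).topologicalClosure)
    (hporth : ∀ w ∈ (⨆ j, Hs j : Submodule ℝ H).topologicalClosure, ⟪y - py, w⟫ = 0) :
    ∃ C : ℝ, ∀ r : ℕ, ‖(∑ j, m r j) - py‖ ≤ C * γ ^ r :=
  stmt_5_general d Hs γ hγ0 hT y m hupd py hpy hporth
end

section
/- Let $\alpha_j:[0,1]\to\mathbb{R}$ be $C^1$, let $E_j:[0,1]\to(0,\infty)$ be $C^1$ with $\int_0^1 \alpha_j E_j = 0$, and let $k$ be a bounded symmetric kernel supported in $[-1,1]$ with $\int k = 1$. Define $\nu_{n,j} = \int_0^1 \int_0^1 \alpha_j(x_j)\, k_h(x_j, u)\, E_j(u)\, du\, dx_j$ using the boundary-corrected kernel $k_h$. Then $\nu_{n,j} = O(h^2)$ as $h \to 0$; in particular $\nu_{n,j} \to 0$. -/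
/-!
Write `N u = ∫₀¹ k_h(s - u) ds` and `w = E / N`. Subtracting the constraint `∫ α E = 0`
turns `ν` into `∬ k_h(x - u) (α x - α u) w u`, and antisymmetrising in `(x, u)` into
`½ ∬ k_h(x - u) (α x - α u) (w u - w x)`. On the support of `k_h(x - u)` we have
`|x - u| ≤ h`, so the first factor is `O(h)`. Away from a boundary layer of width `2h` the
kernel is not cut off, `N = 1` and `w = E`, so the second factor is `O(h)` as well; inside the
layer it is merely bounded (`N ≥ 1/2` because the symmetric kernel keeps half of its mass on
either side), but the layer has measure `O(h)`.
-/

open MeasureTheory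

/-- The centering term `ν_{n,j} = ∫∫ α_j(x) k_h(x,u) E_j(u) du dx` with the
boundary-corrected kernel `k_h(x,u) = (∫₀¹ h⁻¹k(h⁻¹(s-u))ds)⁻¹ h⁻¹ k(h⁻¹(x-u))`. -/
noncomputable def nuTerm (k αj Ej : ℝ → ℝ) (h : ℝ) : ℝ :=
  ∫ x in (0:ℝ)..1, ∫ u in (0:ℝ)..1,
    αj x * ((∫ s in (0:ℝ)..1, h⁻¹ * k (h⁻¹ * (s - u)))⁻¹ * (h⁻¹ * k (h⁻¹ * (x - u)))) * Ej u

open Set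
open scoped NNReal

structure IsSymmKernel (k : ℝ → ℝ) : Prop where
  measurable : Measurable k
  bounded : ∃ B, ∀ u, |k u| ≤ B
  nonneg : ∀ u, 0 ≤ k u
  symm : ∀ u, k (-u) = k u
  support_subset : Function.support k ⊆ Icc (-1) 1
  integral_eq_one : ∫ u, k u = 1

namespace IsSymmKernel

variable {k : ℝ → ℝ} (hk : IsSymmKernel k)
include hk

theorem integrable : Integrable k := by
  obtain ⟨B, hB⟩ := hk.bounded
  rw [← integrableOn_iff_integrable_of_support_subset hk.support_subset]
  exact Measure.integrableOn_of_bounded (by simp) hk.measurable.aestronglyMeasurable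
    (M := B) (ae_of_all _ hB)

theorem intervalIntegral_eq_one {a b : ℝ} (ha : a ≤ -1) (hb : 1 ≤ b) :
    ∫ t in a..b, k t = 1 := by
  rw [intervalIntegral.integral_of_le (by linarith), ← integral_Icc_eq_integral_Ioc,
    ← integral_indicator measurableSet_Icc,
    indicator_eq_self.2 (hk.support_subset.trans (Icc_subset_Icc ha hb)), hk.integral_eq_one]

theorem intervalIntegral_le_one {a b : ℝ} (hab : a ≤ b) : ∫ t in a..b, k t ≤ 1 := by
  rw [intervalIntegral.integral_of_le hab, ← hk.integral_eq_one]
  exact setIntegral_le_integral hk.integrable (ae_of_all _ hk.nonneg)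

theorem intervalIntegral_zero_one : ∫ t in (0:ℝ)..1, k t = 1 / 2 := by
  have hneg : ∫ t in (-1:ℝ)..0, k t = ∫ t in (0:ℝ)..1, k t := by
    simpa [hk.symm] using (intervalIntegral.integral_comp_neg (a := (0:ℝ)) (b := 1) k).symm
  have hsum := intervalIntegral.integral_add_adjacent_intervals (a := (-1:ℝ)) (b := 0) (c := 1)
    hk.integrable.intervalIntegrable hk.integrable.intervalIntegrable
  rw [hk.intervalIntegral_eq_one le_rfl le_rfl, hneg] at hsum
  linarith

theorem intervalIntegral_neg_one_zero : ∫ t in (-1:ℝ)..0, k t = 1 / 2 := by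
  have hsum := intervalIntegral.integral_add_adjacent_intervals (a := (-1:ℝ)) (b := 0) (c := 1)
    hk.integrable.intervalIntegrable hk.integrable.intervalIntegrable
  rw [hk.intervalIntegral_eq_one le_rfl le_rfl, hk.intervalIntegral_zero_one] at hsum
  linarith

theorem intervalIntegral_mono {a b c d : ℝ} (hca : c ≤ a) (hab : a ≤ b) (hbd : b ≤ d) :
    ∫ t in a..b, k t ≤ ∫ t in c..d, k t :=
  intervalIntegral.integral_mono_interval hca hab hbd (ae_of_all _ hk.nonneg)
    hk.integrable.intervalIntegrable

end IsSymmKernel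

noncomputable def scaledKernel (k : ℝ → ℝ) (h t : ℝ) : ℝ := h⁻¹ * k (h⁻¹ * t)

noncomputable def kernelMass (k : ℝ → ℝ) (h u : ℝ) : ℝ :=
  ∫ s in (0:ℝ)..1, scaledKernel k h (s - u)

section ScaledKernel

variable {k : ℝ → ℝ} {h : ℝ}

theorem scaledKernel_sub_comm (hsymm : ∀ u, k (-u) = k u) (x u : ℝ) :
    scaledKernel k h (u - x) = scaledKernel k h (x - u) := by
  rw [scaledKernel, scaledKernel, ← neg_sub, mul_neg, hsymm]

theorem abs_le_of_scaledKernel_ne_zero (hks : Function.support k ⊆ Icc (-1) 1) (hh : 0 < h)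
    {t : ℝ} (ht : scaledKernel k h t ≠ 0) : |t| ≤ h := by
  have hmem : h⁻¹ * t ∈ Icc (-1) 1 := hks (right_ne_zero_of_mul ht)
  rwa [mem_Icc, ← abs_le, abs_mul, abs_of_pos (inv_pos.2 hh), inv_mul_le_iff₀ hh,
    mul_one] at hmem

theorem integral_scaledKernel_sub (hh : h ≠ 0) (a b u : ℝ) :
    ∫ s in a..b, scaledKernel k h (s - u) = ∫ t in h⁻¹ * (a - u)..h⁻¹ * (b - u), k t := by
  simp only [scaledKernel, mul_sub]
  rw [intervalIntegral.integral_const_mul, intervalIntegral.integral_comp_mul_sub k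
    (inv_ne_zero hh), smul_eq_mul, inv_inv, inv_mul_cancel_left₀ hh]

theorem kernelMass_eq (hh : h ≠ 0) (u : ℝ) :
    kernelMass k h u = ∫ t in h⁻¹ * -u..h⁻¹ * (1 - u), k t := by
  rw [kernelMass, integral_scaledKernel_sub hh, zero_sub]

variable (hk : IsSymmKernel k) (hh : 0 < h)
include hk hh

theorem scaledKernel_nonneg (t : ℝ) : 0 ≤ scaledKernel k h t :=
  mul_nonneg (inv_nonneg.2 hh.le) (hk.nonneg _)

theorem integrable_scaledKernel : Integrable (scaledKernel k h) :=
  (hk.integrable.comp_mul_left' (inv_ne_zero hh.ne')).const_mul _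

theorem continuous_kernelMass : Continuous (kernelMass k h) := by
  have hprim := intervalIntegral.continuous_primitive
    (fun a b => hk.integrable.intervalIntegrable (a := a) (b := b)) 0
  have hsplit (u : ℝ) : kernelMass k h u
      = (∫ t in (0:ℝ)..h⁻¹ * (1 - u), k t) - ∫ t in (0:ℝ)..h⁻¹ * -u, k t := by
    rw [kernelMass_eq hh.ne', intervalIntegral.integral_interval_sub_left
      hk.integrable.intervalIntegrable hk.integrable.intervalIntegrable]
  simp_rw [funext hsplit]
  fun_prop

theorem kernelMass_le_one (u : ℝ) : kernelMass k h u ≤ 1 := by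
  rw [kernelMass_eq hh.ne']
  exact hk.intervalIntegral_le_one (by gcongr; linarith)

theorem kernelMass_eq_one {u : ℝ} (hu : u ∈ Icc h (1 - h)) : kernelMass k h u = 1 := by
  rw [kernelMass_eq hh.ne']
  apply hk.intervalIntegral_eq_one
  · rw [mul_neg, neg_le_neg_iff, le_inv_mul_iff₀ hh, mul_one]; exact hu.1
  · rw [le_inv_mul_iff₀ hh, mul_one]; linarith [hu.2]

theorem half_le_kernelMass (hh2 : h ≤ 1 / 2) {u : ℝ} (hu : u ∈ Icc (0:ℝ) 1) :
    1 / 2 ≤ kernelMass k h u := by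
  have hlo : h⁻¹ * -u ≤ 0 :=
    mul_nonpos_of_nonneg_of_nonpos (inv_nonneg.2 hh.le) (by linarith [hu.1])
  have hhi : 0 ≤ h⁻¹ * (1 - u) := mul_nonneg (inv_nonneg.2 hh.le) (by linarith [hu.2])
  rw [kernelMass_eq hh.ne']
  rcases le_total u (1 / 2) with hu2 | hu2
  · rw [← hk.intervalIntegral_zero_one]
    refine hk.intervalIntegral_mono hlo zero_le_one ?_
    rw [le_inv_mul_iff₀ hh, mul_one]; linarith
  · rw [← hk.intervalIntegral_neg_one_zero]
    refine hk.intervalIntegral_mono ?_ (by norm_num) hhi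
    rw [mul_neg, neg_le_neg_iff, le_inv_mul_iff₀ hh, mul_one]; linarith

end ScaledKernel

theorem integral_prod_add_swap {X : Type*} [MeasurableSpace X] {μ : Measure X} [SFinite μ]
    {F : X × X → ℝ} (hF : Integrable F (μ.prod μ)) :
    ∫ p, (F p + F p.swap) ∂μ.prod μ = 2 * ∫ p, F p ∂μ.prod μ := by
  rw [integral_add hF (hF.swap : Integrable (fun p => F p.swap) _), integral_prod_swap F]
  ring

theorem abs_intervalIntegral_le_of_boundary_layer {G : ℝ → ℝ} {a A A' : ℝ} (ha : 0 ≤ a)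
    (ha2 : a ≤ 1 / 2) (hA : ∀ u ∈ Icc (0:ℝ) 1, |G u| ≤ A)
    (hA' : ∀ u ∈ Icc a (1 - a), |G u| ≤ A') :
    |∫ u in (0:ℝ)..1, G u| ≤ 2 * a * A + A' := by
  have hA'nn : 0 ≤ A' := (abs_nonneg _).trans (hA' (1 / 2) ⟨by linarith, by linarith⟩)
  have hAnn : 0 ≤ A := (abs_nonneg _).trans (hA 0 ⟨le_rfl, zero_le_one⟩)
  by_cases hG : IntervalIntegrable G volume 0 1
  swap
  · rw [intervalIntegral.integral_undef hG, abs_zero]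
    positivity
  have hint {b c : ℝ} (hb : b ∈ Icc (0:ℝ) 1) (hc : c ∈ Icc (0:ℝ) 1) :
      IntervalIntegrable G volume b c :=
    hG.mono_set (by rw [uIcc_of_le zero_le_one]; exact uIcc_subset_Icc hb hc)
  have hpiece {b c B : ℝ} (hb : 0 ≤ b) (hbc : b ≤ c) (hc : c ≤ 1)
      (hB : ∀ u ∈ Icc b c, |G u| ≤ B) : |∫ u in b..c, G u| ≤ B * (c - b) := by
    have hB' : ∀ u ∈ uIoc b c, ‖G u‖ ≤ B := fun u hu => by
      rw [uIoc_of_le hbc] at hu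
      exact hB u (Ioc_subset_Icc_self hu)
    simpa [abs_of_nonneg (sub_nonneg.2 hbc)] using
      intervalIntegral.norm_integral_le_of_norm_le_const hB'
  have hleft := hpiece le_rfl ha (by linarith) fun u hu => hA u ⟨hu.1, by linarith [hu.2]⟩
  have hmid := hpiece ha (by linarith) (by linarith) hA'
  have hright := hpiece (b := 1 - a) (by linarith) (by linarith) le_rfl fun u hu =>
    hA u ⟨by linarith [hu.1], hu.2⟩
  rw [← intervalIntegral.integral_add_adjacent_intervals (hint ⟨le_rfl, zero_le_one⟩
      ⟨ha, by linarith⟩) (hint ⟨ha, by linarith⟩ ⟨by linarith, le_rfl⟩),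
    ← intervalIntegral.integral_add_adjacent_intervals (b := 1 - a) (hint ⟨ha, by linarith⟩
      ⟨by linarith, by linarith⟩)
      (hint ⟨by linarith, by linarith⟩ ⟨by linarith, le_rfl⟩)]
  calc _ ≤ |∫ u in (0:ℝ)..a, G u| + (|∫ u in a..1 - a, G u| + |∫ u in 1 - a..1, G u|) :=
        (abs_add_le _ _).trans (add_le_add_right (abs_add_le _ _) _)
    _ ≤ A * (a - 0) + (A' * (1 - a - a) + A * (1 - (1 - a))) := by gcongr
    _ ≤ 2 * a * A + A' := by nlinarith

theorem LipschitzOnWith.abs_sub_le_of_abs_sub_le {f : ℝ → ℝ} {K : ℝ≥0} {s : Set ℝ}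
    (hf : LipschitzOnWith K f s) {x y δ : ℝ} (hx : x ∈ s) (hy : y ∈ s)
    (hxy : |x - y| ≤ δ) :
    |f x - f y| ≤ K * δ := by
  simpa only [Real.dist_eq] using
    (hf.dist_le_mul x hx y hy).trans (mul_le_mul_of_nonneg_left hxy K.coe_nonneg)

local notation "μI" => volume.restrict (Ioc (0:ℝ) 1)

section Smoothing

variable {k : ℝ → ℝ} {h : ℝ} (hk : IsSymmKernel k) (hh : 0 < h)
include hk hh

theorem abs_setIntegral_scaledKernel_mul_le {g : ℝ → ℝ} {u c : ℝ} (hc : 0 ≤ c)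
    (hg : ∀ x ∈ Ioc (0:ℝ) 1, |x - u| ≤ h → |g x| ≤ c) :
    |∫ x in Ioc (0:ℝ) 1, scaledKernel k h (x - u) * g x| ≤ c := by
  have hpt : ∀ x ∈ Ioc (0:ℝ) 1,
      ‖scaledKernel k h (x - u) * g x‖ ≤ c * scaledKernel k h (x - u) := by
    intro x hx
    rw [Real.norm_eq_abs, abs_mul, abs_of_nonneg (scaledKernel_nonneg hk hh _), mul_comm c]
    by_cases h0 : scaledKernel k h (x - u) = 0
    · simp [h0]
    · exact mul_le_mul_of_nonneg_left
        (hg x hx (abs_le_of_scaledKernel_ne_zero hk.support_subset hh h0))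
        (scaledKernel_nonneg hk hh _)
  calc |∫ x in Ioc (0:ℝ) 1, scaledKernel k h (x - u) * g x|
      ≤ ∫ x in Ioc (0:ℝ) 1, c * scaledKernel k h (x - u) :=
        norm_integral_le_of_norm_le
          (((integrable_scaledKernel hk hh).comp_sub_right u).const_mul c).integrableOn
          (ae_restrict_of_forall_mem measurableSet_Ioc hpt)
    _ = c * kernelMass k h u := by
        rw [integral_const_mul, kernelMass, intervalIntegral.integral_of_le zero_le_one]
    _ ≤ c := mul_le_of_le_one_right hc (kernelMass_le_one hk hh u)

theorem integrable_scaledKernel_mul {a : ℝ × ℝ → ℝ}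
    (ha : ContinuousOn a (Icc 0 1 ×ˢ Icc 0 1)) :
    Integrable (fun p => scaledKernel k h (p.1 - p.2) * a p) ((μI).prod μI) := by
  obtain ⟨B, hB⟩ := hk.bounded
  have hcpt : IsCompact (Icc (0:ℝ) 1 ×ˢ Icc (0:ℝ) 1) := isCompact_Icc.prod isCompact_Icc
  have hsub : Ioc (0:ℝ) 1 ×ˢ Ioc (0:ℝ) 1 ⊆ Icc 0 1 ×ˢ Icc 0 1 :=
    prod_mono Ioc_subset_Icc_self Ioc_subset_Icc_self
  have hmeas : Measurable (scaledKernel k h) := by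
    have := hk.measurable
    unfold scaledKernel
    fun_prop
  rw [Measure.prod_restrict, ← Measure.volume_eq_prod]
  refine IntegrableOn.mul_continuousOn_of_subset ?_ ha
    (measurableSet_Ioc.prod measurableSet_Ioc) hcpt hsub
  refine Measure.integrableOn_of_bounded (measure_lt_top_of_subset hsub hcpt.measure_lt_top.ne).ne
    (hmeas.comp (measurable_fst.sub measurable_snd)).aestronglyMeasurable
    (M := h⁻¹ * B) (ae_of_all _ fun p => ?_)
  rw [Real.norm_eq_abs, scaledKernel, abs_mul, abs_of_pos (inv_pos.2 hh)]
  exact mul_le_mul_of_nonneg_left (hB _) (inv_nonneg.2 hh.le)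

theorem continuousOn_div_kernelMass {E : ℝ → ℝ} (hE : ContinuousOn E (Icc 0 1))
    (hN : ∀ u ∈ Icc (0:ℝ) 1, kernelMass k h u ≠ 0) :
    ContinuousOn (fun u => E u / kernelMass k h u) (Icc 0 1) :=
  hE.div (continuous_kernelMass hk hh).continuousOn hN

theorem abs_div_kernelMass_le {E : ℝ → ℝ} {ME : ℝ} (hh2 : h ≤ 1 / 2)
    (hEb : ∀ x ∈ Icc (0:ℝ) 1, |E x| ≤ ME) {u : ℝ} (hu : u ∈ Icc (0:ℝ) 1) :
    |E u / kernelMass k h u| ≤ 2 * ME := by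
  have hN := half_le_kernelMass hk hh hh2 hu
  have hpos : 0 < kernelMass k h u := by linarith
  rw [abs_div, abs_of_pos hpos, div_le_iff₀ hpos]
  nlinarith [hEb u hu, abs_nonneg (E u)]

theorem nuTerm_eq_integral_prod {α E : ℝ → ℝ} (hα : ContinuousOn α (Icc 0 1))
    (hE : ContinuousOn E (Icc 0 1)) (hN : ∀ u ∈ Icc (0:ℝ) 1, kernelMass k h u ≠ 0)
    (hident : ∫ x in (0:ℝ)..1, α x * E x = 0) :
    nuTerm k α E h = ∫ p, scaledKernel k h (p.1 - p.2) *
      ((α p.1 - α p.2) * (E p.2 / kernelMass k h p.2)) ∂(μI).prod μI := by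
  set w := fun u => E u / kernelMass k h u
  have hw : ContinuousOn w (Icc 0 1) := continuousOn_div_kernelMass hk hh hE hN
  have hα₁ : ContinuousOn (fun p : ℝ × ℝ => α p.1) (Icc 0 1 ×ˢ Icc 0 1) :=
    hα.comp continuousOn_fst mapsTo_fst_prod
  have hα₂ : ContinuousOn (fun p : ℝ × ℝ => α p.2) (Icc 0 1 ×ˢ Icc 0 1) :=
    hα.comp continuousOn_snd mapsTo_snd_prod
  have hw₂ : ContinuousOn (fun p : ℝ × ℝ => w p.2) (Icc 0 1 ×ˢ Icc 0 1) :=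
    hw.comp continuousOn_snd mapsTo_snd_prod
  have hint₁ : Integrable (fun p : ℝ × ℝ => scaledKernel k h (p.1 - p.2) * (α p.1 * w p.2))
      ((μI).prod μI) := integrable_scaledKernel_mul hk hh (hα₁.mul hw₂)
  have hint₂ : Integrable (fun p : ℝ × ℝ => scaledKernel k h (p.1 - p.2) * (α p.2 * w p.2))
      ((μI).prod μI) := integrable_scaledKernel_mul hk hh (hα₂.mul hw₂)
  have hnu : nuTerm k α E h =
      ∫ p, scaledKernel k h (p.1 - p.2) * (α p.1 * w p.2) ∂(μI).prod μI := by
    rw [integral_prod _ hint₁, nuTerm, intervalIntegral.integral_of_le zero_le_one]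
    refine setIntegral_congr_fun measurableSet_Ioc fun x _ => ?_
    rw [intervalIntegral.integral_of_le zero_le_one]
    congr 1 with u
    simp only [w, kernelMass, scaledKernel]
    ring
  have hcentre : ∫ p, scaledKernel k h (p.1 - p.2) * (α p.2 * w p.2) ∂(μI).prod μI = 0 := by
    rw [integral_prod_symm _ hint₂]
    refine (setIntegral_congr_fun measurableSet_Ioc fun u hu => ?_).trans
      (by rw [← intervalIntegral.integral_of_le zero_le_one, hident])
    dsimp only
    rw [integral_mul_const, ← intervalIntegral.integral_of_le zero_le_one]
    change kernelMass k h u * (α u * (E u / kernelMass k h u)) = α u * E u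
    field_simp [hN u ⟨hu.1.le, hu.2⟩]
  have hsub := integral_sub hint₁ hint₂
  rw [hcentre, sub_zero] at hsub
  rw [hnu, ← hsub]
  congr 1 with p
  ring

theorem two_mul_nuTerm_eq {α E : ℝ → ℝ} (hα : ContinuousOn α (Icc 0 1))
    (hE : ContinuousOn E (Icc 0 1)) (hN : ∀ u ∈ Icc (0:ℝ) 1, kernelMass k h u ≠ 0)
    (hident : ∫ x in (0:ℝ)..1, α x * E x = 0) :
    2 * nuTerm k α E h = ∫ u in (0:ℝ)..1, ∫ x in Ioc (0:ℝ) 1, scaledKernel k h (x - u) *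
      ((α x - α u) * (E u / kernelMass k h u - E x / kernelMass k h x)) := by
  set w := fun u => E u / kernelMass k h u
  set F := fun p : ℝ × ℝ => scaledKernel k h (p.1 - p.2) * ((α p.1 - α p.2) * w p.2)
  have hF : Integrable F ((μI).prod μI) :=
    integrable_scaledKernel_mul hk hh
      (((hα.comp continuousOn_fst mapsTo_fst_prod).sub
        (hα.comp continuousOn_snd mapsTo_snd_prod)).mul
        ((continuousOn_div_kernelMass hk hh hE hN).comp continuousOn_snd mapsTo_snd_prod))
  have hFswap : (fun p => F p + F p.swap) =
      fun p => scaledKernel k h (p.1 - p.2) * ((α p.1 - α p.2) * (w p.2 - w p.1)) := by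
    ext p
    simp only [F, Prod.fst_swap, Prod.snd_swap, scaledKernel_sub_comm hk.symm]
    ring
  have hFF := hF.add hF.swap
  rw [Pi.add_def] at hFF
  simp only [Function.comp, hFswap] at hFF
  rw [nuTerm_eq_integral_prod hk hh hα hE hN hident, ← integral_prod_add_swap hF, hFswap,
    integral_prod_symm _ hFF, intervalIntegral.integral_of_le zero_le_one]

end Smoothing

theorem abs_nuTerm_le {k α E : ℝ → ℝ} {Kα KE : ℝ≥0} {ME h : ℝ} (hk : IsSymmKernel k)
    (hα : LipschitzOnWith Kα α (Icc 0 1)) (hE : LipschitzOnWith KE E (Icc 0 1))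
    (hEb : ∀ x ∈ Icc (0:ℝ) 1, |E x| ≤ ME) (hident : ∫ x in (0:ℝ)..1, α x * E x = 0)
    (hh : 0 < h) (hh4 : h ≤ 1 / 4) :
    |nuTerm k α E h| ≤ (8 * ME + KE) * Kα * h ^ 2 := by
  have hN : ∀ u ∈ Icc (0:ℝ) 1, kernelMass k h u ≠ 0 := fun u hu =>
    (lt_of_lt_of_le (by norm_num) (half_le_kernelMass hk hh (by linarith) hu)).ne'
  have hME : 0 ≤ ME := (abs_nonneg _).trans (hEb 0 ⟨le_rfl, zero_le_one⟩)
  set w := fun u => E u / kernelMass k h u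
  have hw_le {u : ℝ} (hu : u ∈ Icc (0:ℝ) 1) : |w u| ≤ 2 * ME :=
    abs_div_kernelMass_le hk hh (by linarith) hEb hu
  have hw_eq {u : ℝ} (hu : u ∈ Icc h (1 - h)) : w u = E u := by
    simp [w, kernelMass_eq_one hk hh hu]
  have hlayer : ∀ u ∈ Icc (0:ℝ) 1, |∫ x in Ioc (0:ℝ) 1, scaledKernel k h (x - u) *
      ((α x - α u) * (w u - w x))| ≤ Kα * h * (4 * ME) := fun u hu =>
    abs_setIntegral_scaledKernel_mul_le hk hh (by positivity) fun x hx hxu => by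
      rw [abs_mul]
      refine mul_le_mul (hα.abs_sub_le_of_abs_sub_le (Ioc_subset_Icc_self hx) hu hxu) ?_
        (abs_nonneg _) (by positivity)
      linarith [abs_sub (w u) (w x), hw_le hu, hw_le (Ioc_subset_Icc_self hx)]
  have hinterior : ∀ u ∈ Icc (2 * h) (1 - 2 * h), |∫ x in Ioc (0:ℝ) 1,
      scaledKernel k h (x - u) * ((α x - α u) * (w u - w x))| ≤ Kα * h * (KE * h) :=
    fun u hu => abs_setIntegral_scaledKernel_mul_le hk hh (by positivity) fun x hx hxu => by
      have hu₀ : u ∈ Icc (0:ℝ) 1 := ⟨by linarith [hu.1], by linarith [hu.2]⟩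
      have hx' : x ∈ Icc h (1 - h) := by
        rw [abs_le] at hxu
        exact ⟨by linarith [hu.1], by linarith [hu.2]⟩
      rw [abs_mul, hw_eq hx', hw_eq ⟨by linarith [hu.1], by linarith [hu.2]⟩]
      exact mul_le_mul (hα.abs_sub_le_of_abs_sub_le (Ioc_subset_Icc_self hx) hu₀ hxu)
        (hE.abs_sub_le_of_abs_sub_le hu₀ (Ioc_subset_Icc_self hx) (by rwa [abs_sub_comm]))
        (abs_nonneg _) (by positivity)
  have hbound := abs_intervalIntegral_le_of_boundary_layer (by positivity) (by linarith)
    hlayer hinterior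
  rw [← two_mul_nuTerm_eq hk hh hα.continuousOn hE.continuousOn hN hident, abs_mul,
    abs_two] at hbound
  nlinarith [show (0:ℝ) ≤ KE * Kα * h ^ 2 by positivity]

theorem stmt_13_general (k αj Ej : ℝ → ℝ)
    (hkm : Measurable k) (hkb : ∃ B, ∀ u, |k u| ≤ B) (hk0 : ∀ u, 0 ≤ k u)
    (hsym : ∀ u, k (-u) = k u) (hks : Function.support k ⊆ Set.Icc (-1) 1)
    (hki : ∫ u, k u = 1)
    (hα : ContDiffOn ℝ 1 αj (Set.Icc 0 1))
    (hE : ContDiffOn ℝ 1 Ej (Set.Icc 0 1))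
    (hident : ∫ x in (0:ℝ)..1, αj x * Ej x = 0) :
    (∃ C > 0, ∃ δ > 0, ∀ h : ℝ, 0 < h → h < δ → |nuTerm k αj Ej h| ≤ C * h^2) ∧
    Filter.Tendsto (nuTerm k αj Ej) (nhdsWithin 0 (Set.Ioi 0)) (nhds 0) := by
  have hk : IsSymmKernel k := ⟨hkm, hkb, hk0, hsym, hks, hki⟩
  obtain ⟨Kα, hKα⟩ := hα.exists_lipschitzOnWith one_ne_zero (convex_Icc 0 1) isCompact_Icc
  obtain ⟨KE, hKE⟩ := hE.exists_lipschitzOnWith one_ne_zero (convex_Icc 0 1) isCompact_Icc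
  obtain ⟨ME, hME⟩ := isCompact_Icc.exists_bound_of_continuousOn hE.continuousOn
  have hME0 : 0 ≤ ME := (norm_nonneg _).trans (hME 0 ⟨le_rfl, zero_le_one⟩)
  set C := (8 * ME + KE) * Kα + 1
  have hbound (h : ℝ) (hh : 0 < h) (hh4 : h < 1 / 4) : |nuTerm k αj Ej h| ≤ C * h ^ 2 :=
    (abs_nuTerm_le hk hKα hKE hME hident hh hh4.le).trans (by gcongr; linarith)
  refine ⟨⟨C, by positivity, 1 / 4, by norm_num, hbound⟩,
    squeeze_zero_norm' (a := fun h => C * h ^ 2) ?_ ?_⟩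
  · filter_upwards [Ioo_mem_nhdsGT (by norm_num : (0:ℝ) < 1 / 4)] with h hh
    exact hbound h hh.1 hh.2
  · exact ((continuous_const.mul (continuous_pow 2)).tendsto' 0 0 (by simp)).mono_left
      nhdsWithin_le_nhds

/-- under the identification constraint `∫ α_j E_j = 0`, the smoothed
constraint deviates from zero only at order `h²`; in particular it tends to zero. -/
theorem stmt_13 (k αj Ej : ℝ → ℝ)
    (hkm : Measurable k) (hkb : ∃ B, ∀ u, |k u| ≤ B) (hk0 : ∀ u, 0 ≤ k u)
    (hsym : ∀ u, k (-u) = k u) (hks : Function.support k ⊆ Set.Icc (-1) 1)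
    (hki : ∫ u, k u = 1)
    (hα : ContDiffOn ℝ 1 αj (Set.Icc 0 1))
    (hE : ContDiffOn ℝ 1 Ej (Set.Icc 0 1))
    (hEpos : ∀ x ∈ Set.Icc (0:ℝ) 1, 0 < Ej x)
    (hident : ∫ x in (0:ℝ)..1, αj x * Ej x = 0) :
    (∃ C > 0, ∃ δ > 0, ∀ h : ℝ, 0 < h → h < δ → |nuTerm k αj Ej h| ≤ C * h^2) ∧
    Filter.Tendsto (nuTerm k αj Ej) (nhdsWithin 0 (Set.Ioi 0)) (nhds 0) :=
  stmt_13_general k αj Ej hkm hkb hk0 hsym hks hki hα hE hident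
end
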